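/- Let (s,i) be the solution of the controlled SIR system with control u and initial data i₀ ∈ (0,1), s₀ ∈ (0, 1−i₀]. Then: (1) s is strictly decreasing on [0,∞); (2) the limit s_∞ := lim_{t→∞} s(t) exists and lies in (0,1), and lim_{t→∞} i(t) = 0. -/

import Mathlib

open MeasureTheory Filter Set intervalIntegral
open scoped ENNReal

noncomputable section

/-- A control: a measurable (essentially bounded) function with values in `[0, umax]`. -/
def IsControl (umax : ℝ) (u : ℝ → ℝ) : Prop :=
  Measurable u ∧ ∀ t : ℝ, u t ∈ Set.Icc (0 : ℝ) umax

/-- Solution of the controlled SIR system on `[0,∞)`, in integral (i.e. locally absolutely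
continuous) form: `s' = -(β-u)·s·i`, `i' = (β-u)·s·i - γ·i` a.e., `s 0 = s₀`, `i 0 = i₀`. -/
def SIRSol (β γ : ℝ) (u s i : ℝ → ℝ) (s₀ i₀ : ℝ) : Prop :=
  Continuous s ∧ Continuous i ∧
  (∀ t : ℝ, 0 ≤ t → s t = s₀ + ∫ τ in (0:ℝ)..t, -((β - u τ) * s τ * i τ)) ∧
  (∀ t : ℝ, 0 ≤ t → i t = i₀ + ∫ τ in (0:ℝ)..t, ((β - u τ) * s τ * i τ - γ * i τ))

/-- Solution of the controlled SIR system on `[0,T]`, in integral form. -/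
def SIRSolOn (β γ T : ℝ) (u s i : ℝ → ℝ) (s₀ i₀ : ℝ) : Prop :=
  ContinuousOn s (Set.Icc 0 T) ∧ ContinuousOn i (Set.Icc 0 T) ∧
  (∀ t ∈ Set.Icc (0:ℝ) T, s t = s₀ + ∫ τ in (0:ℝ)..t, -((β - u τ) * s τ * i τ)) ∧
  (∀ t ∈ Set.Icc (0:ℝ) T, i t = i₀ + ∫ τ in (0:ℝ)..t, ((β - u τ) * s τ * i τ - γ * i τ))

/-- The triangle `T = {(s,i) ∈ (0,1]² : s + i ≤ 1}`. -/
def Triangle : Set (ℝ × ℝ) :=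
  {p | 0 < p.1 ∧ p.1 ≤ 1 ∧ 0 < p.2 ∧ p.2 ≤ 1 ∧ p.1 + p.2 ≤ 1}

/-- The curve `Φ_max`. -/
def PhiMax (β γ umax iM : ℝ) (x : ℝ) : ℝ :=
  if x < γ / (β - umax) then iM
  else γ / (β - umax) + iM - x + (γ / (β - umax)) * (Real.log x - Real.log (γ / (β - umax)))

/-- The curve `Φ₀`. -/
def Phi0 (β γ iM : ℝ) (x : ℝ) : ℝ :=
  if x < γ / β then iM
  else γ / β + iM - x + (γ / β) * (Real.log x - Real.log (γ / β))

/-- The ICU (state) constraint `i(t) ≤ i_M` for all `t ≥ 0`. -/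
def Admissible (iM : ℝ) (i : ℝ → ℝ) : Prop := ∀ t : ℝ, 0 ≤ t → i t ≤ iM

/-- Infinite-horizon cost `J^∞(u) = ∫₀^∞ (λ₁ u + λ₂ i) dt`, with values in `[0,∞]`. -/
def Cost (l1 l2 : ℝ) (u i : ℝ → ℝ) : ℝ≥0∞ :=
  ∫⁻ t in Set.Ioi (0:ℝ), ENNReal.ofReal (l1 * u t + l2 * i t)

/-- Finite-horizon cost `J^T(u) = ∫₀^T (λ₁ u + λ₂ i) dt`. -/
def CostT (l1 l2 T : ℝ) (u i : ℝ → ℝ) : ℝ≥0∞ :=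
  ∫⁻ t in Set.Ioc (0:ℝ) T, ENNReal.ofReal (l1 * u t + l2 * i t)

/-- The safe (no-effort) zone `A`. -/
def SafeZone (β γ iM : ℝ) : Set (ℝ × ℝ) :=
  {p | p ∈ Triangle ∧ ∃ s i : ℝ → ℝ,
    SIRSol β γ (fun _ => 0) s i p.1 p.2 ∧ Admissible iM i}

/-- The viable (feasible) set `B`. -/
def ViableSet (β γ umax iM : ℝ) : Set (ℝ × ℝ) :=
  {p | p ∈ Triangle ∧ ∃ u s i : ℝ → ℝ, IsControl umax u ∧
    SIRSol β γ u s i p.1 p.2 ∧ Admissible iM i}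

/-- Weak* convergence in `L^∞(0,∞)`: testing against every `L¹` function. -/
def WeakStarLim (un : ℕ → ℝ → ℝ) (u : ℝ → ℝ) : Prop :=
  ∀ g : ℝ → ℝ, MeasureTheory.IntegrableOn g (Set.Ioi 0) →
    Filter.Tendsto (fun n => ∫ t in Set.Ioi (0:ℝ), un n t * g t) Filter.atTop
      (nhds (∫ t in Set.Ioi (0:ℝ), u t * g t))

/-!
A Grönwall argument run backwards from a zero shows that a continuous solution of
`h(t) = h₀ + ∫₀ᵗ g` with `|g| ≤ C |h|` on compact intervals never vanishes, so `s` and `i` stay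
positive; hence the incidence `(β - u) s i` is positive and `s` decreases strictly.
Since `s + i + γ ∫₀ᵗ i` is constant, `i` is integrable on `(0, ∞)` with `∫ i ≤ (s₀ + i₀) / γ`.
While `∫ i` grows by at most `1 / (2β)`, `s` loses at most half its value, and finitely many such
stretches exhaust `[0, ∞)`: `s` stays above a positive constant and so has a positive limit.
Then `i = s₀ + i₀ - γ ∫₀ᵗ i - s` has a limit as well, which vanishes because `i` is integrable.
-/
theorem eqOn_zero_of_le_mul_integral {ψ : ℝ → ℝ} {C T : ℝ} (hψ : Continuous ψ)
    (hnn : ∀ r ∈ Icc 0 T, 0 ≤ ψ r) (hle : ∀ r ∈ Icc 0 T, ψ r ≤ C * ∫ x in 0..r, ψ x) :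
    ∀ r ∈ Icc 0 T, ψ r = 0 := by
  set Φ : ℝ → ℝ := fun r => ∫ x in 0..r, ψ x
  have hΦ : ∀ r, HasDerivAt Φ (ψ r) r := fun r => (hψ.integral_hasStrictDerivAt 0 r).hasDerivAt
  have hΦnn : ∀ r ∈ Icc 0 T, 0 ≤ Φ r := fun r hr =>
    integral_nonneg hr.1 fun x hx => hnn x ⟨hx.1, hx.2.trans hr.2⟩
  have hΦzero : ∀ r ∈ Icc 0 T, Φ r = 0 := by
    intro r hr
    have hgr := norm_le_gronwallBound_of_norm_deriv_right_le (δ := 0) (K := C) (ε := 0)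
      (fun x _ => (hΦ x).continuousAt.continuousWithinAt) (fun x _ => (hΦ x).hasDerivWithinAt)
      (by simp [Φ]) (fun x hx => ?_) r hr
    · rw [gronwallBound_ε0_δ0] at hgr
      exact norm_le_zero_iff.1 hgr
    · have hx' : x ∈ Icc 0 T := Ico_subset_Icc_self hx
      rw [Real.norm_of_nonneg (hnn x hx'), Real.norm_of_nonneg (hΦnn x hx'), add_zero]
      exact hle x hx'
  intro r hr
  have hψr := hle r hr
  rw [show (∫ x in 0..r, ψ x) = 0 from hΦzero r hr, mul_zero] at hψr
  exact le_antisymm hψr (hnn r hr)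

theorem pos_of_eq_add_integral {h g : ℝ → ℝ} {h₀ : ℝ} (hh : Continuous h)
    (hg : ∀ a b, IntervalIntegrable g volume a b)
    (heq : ∀ t, 0 ≤ t → h t = h₀ + ∫ τ in 0..t, g τ)
    (hbound : ∀ T, ∃ C, ∀ τ ∈ Icc 0 T, |g τ| ≤ C * |h τ|) (h₀pos : 0 < h₀) :
    ∀ t, 0 ≤ t → 0 < h t := by
  have hh0 : h 0 = h₀ := by simpa using heq 0 le_rfl
  have hne : ∀ t₀, 0 ≤ t₀ → h t₀ ≠ 0 := by
    intro t₀ ht₀ hzero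
    obtain ⟨C, hC⟩ := hbound t₀
    have hback : ∀ r ∈ Icc 0 t₀, |h (t₀ - r)| ≤ C * ∫ x in 0..r, |h (t₀ - x)| := by
      intro r hr
      have hdiff : h (t₀ - r) = -∫ τ in (t₀ - r)..t₀, g τ := by
        rw [← integral_interval_sub_left (hg 0 t₀) (hg 0 (t₀ - r))]
        linarith [heq t₀ ht₀, heq (t₀ - r) (by linarith [hr.2])]
      calc |h (t₀ - r)| ≤ ∫ τ in (t₀ - r)..t₀, |g τ| := by
            rw [hdiff, abs_neg]
            exact abs_integral_le_integral_abs (by linarith [hr.1])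
        _ ≤ ∫ τ in (t₀ - r)..t₀, C * |h τ| :=
            integral_mono_on (by linarith [hr.1]) (hg _ _).abs
              ((continuous_const.mul hh.abs).intervalIntegrable _ _)
              fun τ hτ => hC τ ⟨by linarith [hτ.1, hr.2], hτ.2⟩
        _ = C * ∫ x in 0..r, |h (t₀ - x)| := by
            rw [intervalIntegral.integral_const_mul, integral_comp_sub_left (fun τ => |h τ|),
              sub_zero]
    have h0zero := eqOn_zero_of_le_mul_integral (ψ := fun r => |h (t₀ - r)|)
      (hh.comp (continuous_const.sub continuous_id)).abs (fun r _ => abs_nonneg _) hback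
      t₀ ⟨ht₀, le_rfl⟩
    simp only [sub_self, abs_eq_zero, hh0] at h0zero
    exact h₀pos.ne' h0zero
  intro t ht
  by_contra hle
  obtain ⟨c, hc, hzero⟩ :=
    intermediate_value_Icc' ht hh.continuousOn ⟨not_lt.1 hle, hh0 ▸ h₀pos.le⟩
  exact hne c hc.1 hzero

theorem AntitoneOn.exists_tendsto_atTop {f : ℝ → ℝ} {a : ℝ} (hf : AntitoneOn f (Ici a))
    (hbdd : BddBelow (f '' Ici a)) : ∃ L, Tendsto f atTop (nhds L) := by
  set g : ℝ → ℝ := fun t => f (max t a)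
  have hg : Antitone g := fun x y hxy =>
    hf (mem_Ici.2 (le_max_right _ _)) (mem_Ici.2 (le_max_right _ _)) (max_le_max hxy le_rfl)
  obtain ⟨c, hc⟩ := hbdd
  refine ⟨⨅ t, g t, (tendsto_atTop_ciInf hg ⟨c, ?_⟩).congr' ?_⟩
  · rintro _ ⟨t, rfl⟩
    exact hc ⟨max t a, mem_Ici.2 (le_max_right _ _), rfl⟩
  · filter_upwards [eventually_ge_atTop a] with t ht
    simp [g, max_eq_left ht]

theorem MeasureTheory.IntegrableOn.eq_zero_of_tendsto_atTop {f : ℝ → ℝ} {a L : ℝ}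
    (hf : IntegrableOn f (Ioi a)) (hL : Tendsto f atTop (nhds L)) : L = 0 := by
  refine IntegrableAtFilter.eq_zero_of_tendsto ⟨Ioi a, Ioi_mem_atTop a, hf⟩ (fun S hS => ?_) hL
  obtain ⟨b, hb⟩ := mem_atTop_sets.1 hS
  rw [← top_le_iff, ← Real.volume_Ici (a := b)]
  exact measure_mono hb

theorem exists_pos_le_of_half_le {s Ψ : ℝ → ℝ} {δ K : ℝ} (hδ : 0 < δ) (hΨ : Continuous Ψ)
    (hΨ0 : Ψ 0 = 0) (hΨK : ∀ t, 0 ≤ t → Ψ t ≤ K) (hs0 : 0 < s 0)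
    (hhalf : ∀ t₁ t₂, 0 ≤ t₁ → t₁ ≤ t₂ → Ψ t₂ - Ψ t₁ ≤ δ → s t₁ / 2 ≤ s t₂) :
    ∃ c, 0 < c ∧ ∀ t, 0 ≤ t → c ≤ s t := by
  have hhalving : ∀ n : ℕ, ∀ t, 0 ≤ t → Ψ t ≤ n * δ → s 0 / 2 ^ (n + 1) ≤ s t := by
    intro n
    induction n with
    | zero =>
      intro t ht hΨt
      simpa using hhalf 0 t le_rfl ht (by simp only [Nat.cast_zero, zero_mul] at hΨt; linarith)
    | succ n ih =>
      intro t ht hΨt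
      by_cases hlow : Ψ t ≤ n * δ
      · calc s 0 / 2 ^ (n + 1 + 1) ≤ s 0 / 2 ^ (n + 1) := by gcongr <;> norm_num
          _ ≤ s t := ih t ht hlow
      · obtain ⟨t₁, ht₁, hΨt₁⟩ := intermediate_value_Icc ht hΨ.continuousOn
          (⟨by rw [hΨ0]; positivity, (not_le.1 hlow).le⟩ : (n * δ : ℝ) ∈ Icc (Ψ 0) (Ψ t))
        calc s 0 / 2 ^ (n + 1 + 1) = s 0 / 2 ^ (n + 1) / 2 := by ring
          _ ≤ s t₁ / 2 := by gcongr; exact ih t₁ ht₁.1 hΨt₁.le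
          _ ≤ s t := hhalf t₁ t ht₁.1 ht₁.2 (by push_cast at hΨt; linarith)
  obtain ⟨N, hN⟩ := exists_nat_ge (K / δ)
  refine ⟨s 0 / 2 ^ (N + 1), by positivity, fun t ht => hhalving N t ht ?_⟩
  calc Ψ t ≤ K := hΨK t ht
    _ ≤ N * δ := by rwa [div_le_iff₀ hδ] at hN

namespace IsControl

variable {umax : ℝ} {u : ℝ → ℝ}

theorem intervalIntegrable (hu : IsControl umax u) (a b : ℝ) : IntervalIntegrable u volume a b :=
  (intervalIntegrable_const (c := umax)).mono_fun' hu.1.aestronglyMeasurable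
    (ae_of_all _ fun t => show ‖u t‖ ≤ umax by
      rw [Real.norm_of_nonneg (hu.2 t).1]; exact (hu.2 t).2)

theorem abs_sub_le (hu : IsControl umax u) (β t : ℝ) : |β - u t| ≤ |β| + umax :=
  (abs_sub _ _).trans (by rw [abs_of_nonneg (hu.2 t).1]; linarith [(hu.2 t).2])

theorem intervalIntegrable_incidence (hu : IsControl umax u) (β : ℝ) {s i : ℝ → ℝ}
    (hs : Continuous s) (hi : Continuous i) (a b : ℝ) :
    IntervalIntegrable (fun τ => (β - u τ) * s τ * i τ) volume a b :=
  ((intervalIntegrable_const.sub (hu.intervalIntegrable a b)).mul_continuousOn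
    hs.continuousOn).mul_continuousOn hi.continuousOn

end IsControl

namespace SIRSol

variable {β γ umax : ℝ} {u s i : ℝ → ℝ} {s₀ i₀ : ℝ}

theorem s_zero (hsol : SIRSol β γ u s i s₀ i₀) : s 0 = s₀ := by
  simpa using hsol.2.2.1 0 le_rfl

theorem pos (hsol : SIRSol β γ u s i s₀ i₀) (hu : IsControl umax u) (hs₀ : 0 < s₀)
    (hi₀ : 0 < i₀) (t : ℝ) (ht : 0 ≤ t) : 0 < s t ∧ 0 < i t := by
  obtain ⟨hs, hi, hseq, hieq⟩ := hsol
  have hf := hu.intervalIntegrable_incidence β hs hi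
  set B := |β| + umax
  have hB : 0 ≤ B := (abs_nonneg _).trans (hu.abs_sub_le β 0)
  refine ⟨pos_of_eq_add_integral (g := fun τ => -((β - u τ) * s τ * i τ)) hs
      (fun a b => (hf a b).neg) hseq (fun T => ?_) hs₀ t ht,
    pos_of_eq_add_integral hi (fun a b => (hf a b).sub ((hi.intervalIntegrable a b).const_mul γ))
      hieq (fun T => ?_) hi₀ t ht⟩
  · obtain ⟨M, hM⟩ := isCompact_Icc.exists_bound_of_continuousOn (hi.continuousOn (s := Icc 0 T))
    refine ⟨B * M, fun τ hτ => ?_⟩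
    rw [abs_neg, abs_mul, abs_mul, mul_right_comm]
    exact mul_le_mul_of_nonneg_right (mul_le_mul (hu.abs_sub_le β τ) (hM τ hτ) (abs_nonneg _) hB)
      (abs_nonneg _)
  · obtain ⟨M, hM⟩ := isCompact_Icc.exists_bound_of_continuousOn (hs.continuousOn (s := Icc 0 T))
    refine ⟨B * M + |γ|, fun τ hτ => ?_⟩
    rw [← sub_mul, abs_mul]
    refine mul_le_mul_of_nonneg_right ((abs_sub _ _).trans ?_) (abs_nonneg _)
    rw [abs_mul]
    gcongr
    · exact hu.abs_sub_le β τ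
    · exact hM τ hτ

theorem sub_eq_integral (hsol : SIRSol β γ u s i s₀ i₀) (hu : IsControl umax u) {t₁ t₂ : ℝ}
    (ht₁ : 0 ≤ t₁) (ht₂ : 0 ≤ t₂) :
    s t₁ - s t₂ = ∫ τ in t₁..t₂, (β - u τ) * s τ * i τ := by
  have hf := hu.intervalIntegrable_incidence β hsol.1 hsol.2.1
  rw [hsol.2.2.1 t₁ ht₁, hsol.2.2.1 t₂ ht₂, intervalIntegral.integral_neg,
    intervalIntegral.integral_neg, ← integral_interval_sub_left (hf 0 t₂) (hf 0 t₁)]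
  ring

theorem strictAntiOn (hsol : SIRSol β γ u s i s₀ i₀) (hu : IsControl umax u) (humax : umax < β)
    (hs₀ : 0 < s₀) (hi₀ : 0 < i₀) : StrictAntiOn s (Ici 0) := by
  intro t₁ ht₁ t₂ ht₂ h12
  have hpos : 0 < ∫ τ in t₁..t₂, (β - u τ) * s τ * i τ := by
    refine intervalIntegral_pos_of_pos_on
      (hu.intervalIntegrable_incidence β hsol.1 hsol.2.1 t₁ t₂) (fun τ hτ => ?_) h12
    obtain ⟨hsτ, hiτ⟩ := hsol.pos hu hs₀ hi₀ τ (le_trans ht₁ hτ.1.le)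
    have : 0 < β - u τ := by linarith [(hu.2 τ).2]
    positivity
  linarith [hsol.sub_eq_integral hu ht₁ ht₂]

theorem add_add_integral (hsol : SIRSol β γ u s i s₀ i₀) (hu : IsControl umax u) {t : ℝ}
    (ht : 0 ≤ t) : s t + i t + γ * ∫ τ in 0..t, i τ = s₀ + i₀ := by
  have hi : IntervalIntegrable i volume 0 t := hsol.2.1.intervalIntegrable 0 t
  rw [hsol.2.2.1 t ht, hsol.2.2.2 t ht, intervalIntegral.integral_neg,
    intervalIntegral.integral_sub (hu.intervalIntegrable_incidence β hsol.1 hsol.2.1 0 t)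
      (hi.const_mul γ), intervalIntegral.integral_const_mul]
  ring

theorem integral_i_le (hsol : SIRSol β γ u s i s₀ i₀) (hu : IsControl umax u) (hγ : 0 < γ)
    (hs₀ : 0 < s₀) (hi₀ : 0 < i₀) {t : ℝ} (ht : 0 ≤ t) :
    ∫ τ in 0..t, i τ ≤ (s₀ + i₀) / γ := by
  rw [le_div_iff₀' hγ, ← hsol.add_add_integral hu ht]
  linarith [hsol.pos hu hs₀ hi₀ t ht]

theorem integrableOn_i (hsol : SIRSol β γ u s i s₀ i₀) (hu : IsControl umax u) (hγ : 0 < γ)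
    (hs₀ : 0 < s₀) (hi₀ : 0 < i₀) : IntegrableOn i (Ioi 0) := by
  refine integrableOn_Ioi_of_intervalIntegral_norm_bounded ((s₀ + i₀) / γ) 0
    (fun t => hsol.2.1.integrableOn_Icc.mono_set Ioc_subset_Icc_self) tendsto_id ?_
  filter_upwards [eventually_ge_atTop 0] with t ht
  rw [intervalIntegral.integral_congr fun τ hτ => Real.norm_of_nonneg
    (hsol.pos hu hs₀ hi₀ τ (by simp only [id, uIcc_of_le ht, mem_Icc] at hτ; exact hτ.1)).2.le]
  exact hsol.integral_i_le hu hγ hs₀ hi₀ ht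

theorem mul_one_sub_le (hsol : SIRSol β γ u s i s₀ i₀) (hu : IsControl umax u) (humax : umax < β)
    (hβ : 0 ≤ β) (hs₀ : 0 < s₀) (hi₀ : 0 < i₀) {t₁ t₂ : ℝ} (ht₁ : 0 ≤ t₁) (h12 : t₁ ≤ t₂) :
    s t₁ * (1 - β * ∫ τ in t₁..t₂, i τ) ≤ s t₂ := by
  have hanti := (hsol.strictAntiOn hu humax hs₀ hi₀).antitoneOn
  calc s t₁ * (1 - β * ∫ τ in t₁..t₂, i τ) = s t₁ - ∫ τ in t₁..t₂, β * s t₁ * i τ := by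
        rw [intervalIntegral.integral_const_mul]; ring
    _ ≤ s t₁ - ∫ τ in t₁..t₂, (β - u τ) * s τ * i τ := by
        gcongr
        refine integral_mono_on h12 (hu.intervalIntegrable_incidence β hsol.1 hsol.2.1 t₁ t₂)
          ((hsol.2.1.intervalIntegrable t₁ t₂).const_mul _) fun τ hτ => ?_
        have hτ₀ : 0 ≤ τ := ht₁.trans hτ.1
        obtain ⟨hsτ, hiτ⟩ := hsol.pos hu hs₀ hi₀ τ hτ₀
        have hsle : s τ ≤ s t₁ := hanti (mem_Ici.2 ht₁) (mem_Ici.2 hτ₀) hτ.1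
        gcongr
        · linarith [(hu.2 τ).1]
    _ = s t₂ := by rw [← hsol.sub_eq_integral hu ht₁ (ht₁.trans h12)]; ring

theorem exists_pos_le (hsol : SIRSol β γ u s i s₀ i₀) (hu : IsControl umax u) (humax : umax < β)
    (hβ : 0 < β) (hγ : 0 < γ) (hs₀ : 0 < s₀) (hi₀ : 0 < i₀) :
    ∃ c, 0 < c ∧ ∀ t, 0 ≤ t → c ≤ s t := by
  have hi := hsol.2.1
  refine exists_pos_le_of_half_le (Ψ := fun t => ∫ τ in 0..t, i τ) (δ := 1 / (2 * β))
    (by positivity) (continuous_primitive (fun a b => hi.intervalIntegrable a b) 0) (by simp)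
    (fun t ht => hsol.integral_i_le hu hγ hs₀ hi₀ ht) (hsol.s_zero ▸ hs₀)
    fun t₁ t₂ ht₁ h12 hΨ => ?_
  rw [integral_interval_sub_left (hi.intervalIntegrable 0 t₂) (hi.intervalIntegrable 0 t₁)] at hΨ
  have hhalf : 1 / 2 ≤ 1 - β * ∫ τ in t₁..t₂, i τ := by
    have h := mul_le_mul_of_nonneg_left hΨ hβ.le
    rw [show β * (1 / (2 * β)) = 1 / 2 by field_simp] at h
    linarith
  calc s t₁ / 2 = s t₁ * (1 / 2) := by ring
    _ ≤ s t₁ * (1 - β * ∫ τ in t₁..t₂, i τ) :=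
        mul_le_mul_of_nonneg_left hhalf (hsol.pos hu hs₀ hi₀ t₁ ht₁).1.le
    _ ≤ s t₂ := hsol.mul_one_sub_le hu humax hβ.le hs₀ hi₀ ht₁ h12

end SIRSol

theorem statement2_general (β γ umax : ℝ) (hβ : 0 < β) (hγ : 0 < γ)
    (humaxβ : umax < β)
    (u : ℝ → ℝ) (hu : IsControl umax u)
    (i₀ s₀ : ℝ) (hi₀ : i₀ ∈ Set.Ioo (0:ℝ) 1) (hs₀ : s₀ ∈ Set.Ioc (0:ℝ) (1 - i₀))
    (s i : ℝ → ℝ) (hsol : SIRSol β γ u s i s₀ i₀) :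
    StrictAntiOn s (Set.Ici 0) ∧
    (∃ sInf ∈ Set.Ioo (0:ℝ) 1, Filter.Tendsto s Filter.atTop (nhds sInf)) ∧
    Filter.Tendsto i Filter.atTop (nhds 0) := by
  have hanti := hsol.strictAntiOn hu humaxβ hs₀.1 hi₀.1
  obtain ⟨c, hc, hcs⟩ := hsol.exists_pos_le hu humaxβ hβ hγ hs₀.1 hi₀.1
  obtain ⟨sInf, hslim⟩ :=
    hanti.antitoneOn.exists_tendsto_atTop ⟨c, by rintro _ ⟨t, ht, rfl⟩; exact hcs t ht⟩
  have hsInf_pos : 0 < sInf := hc.trans_le (ge_of_tendsto hslim (eventually_atTop.2 ⟨0, hcs⟩))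
  have hsInf_le : sInf ≤ s₀ := le_of_tendsto hslim (eventually_atTop.2 ⟨0, fun t ht =>
    hsol.s_zero ▸ hanti.antitoneOn (mem_Ici.2 le_rfl) (mem_Ici.2 ht) ht⟩)
  have hiint := hsol.integrableOn_i hu hγ hs₀.1 hi₀.1
  have hilim : Tendsto i atTop (nhds (s₀ + i₀ - γ * (∫ τ in Ioi 0, i τ) - sInf)) := by
    have hΨlim : Tendsto (fun t => ∫ τ in 0..t, i τ) atTop (nhds (∫ τ in Ioi 0, i τ)) :=
      intervalIntegral_tendsto_integral_Ioi 0 hiint tendsto_id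
    refine ((tendsto_const_nhds.sub (hΨlim.const_mul γ)).sub hslim).congr' ?_
    filter_upwards [eventually_ge_atTop 0] with t ht
    linarith [hsol.add_add_integral hu ht]
  refine ⟨hanti, ⟨sInf, ⟨hsInf_pos, by linarith [hs₀.2, hi₀.1]⟩, hslim⟩, ?_⟩
  rwa [hiint.eq_zero_of_tendsto_atTop hilim] at hilim

/-- `s` is strictly decreasing on `[0,∞)`; `s` has a limit `s_∞ ∈ (0,1)` at infinity and
`i(t) → 0` as `t → ∞`. -/
theorem statement2 (β γ umax : ℝ) (hβ : 0 < β) (hγ : 0 < γ)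
    (humax : 0 < umax) (humaxβ : umax < β)
    (u : ℝ → ℝ) (hu : IsControl umax u)
    (i₀ s₀ : ℝ) (hi₀ : i₀ ∈ Set.Ioo (0:ℝ) 1) (hs₀ : s₀ ∈ Set.Ioc (0:ℝ) (1 - i₀))
    (s i : ℝ → ℝ) (hsol : SIRSol β γ u s i s₀ i₀) :
    StrictAntiOn s (Set.Ici 0) ∧
    (∃ sInf ∈ Set.Ioo (0:ℝ) 1, Filter.Tendsto s Filter.atTop (nhds sInf)) ∧
    Filter.Tendsto i Filter.atTop (nhds 0) :=
  statement2_general β γ umax hβ hγ humaxβ u hu i₀ s₀ hi₀ hs₀ s i hsol
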